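/- Tail series estimate used in the proof of Theorem 1.8: let (X,d,μ) be an RD-space, p₁ ∈ (1,∞), ω ∈ A_{p₁}(μ), and f ∈ M^{p₁,φ}(ω) where φ is increasing, continuous and satisfies conditions (1.10) and (1.11). Then there is a constant C such that for every ball B, ∑_{k=1}^∞ μ(2^k B)⁻¹ ∫_{2^{k+1}B} |f(y)| dμ(y) ≤ C·‖f‖_{M^{p₁,φ}(ω)}·(φ(ω(B))/ω(B))^{1/p₁}. -/

import Mathlib

/-!
By (1.11) and the monotonicity of `φ`, the tail `F t = ∫_t^∞ φ(s)/s² ds` is comparable to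
`φ t / t` and loses a fixed fraction of `φ t / t` between `t` and `c t`; hence
`F (c t) ≤ θ F t` for some `θ < 1`, and `φ u / u ≲ θ^k φ t / t` whenever `u ≥ c^k t`.
The weight is reverse doubling, so `ω(2^k B) ≥ C₃^k ω(B)` and
`(φ(ω(2^k B))/ω(2^k B))^{1/p₁}` decays geometrically in `k`.
On each ball, Hölder's inequality with the `A_{p₁}` condition and the Morrey bound give
`∫_{2B} |f| ≲ μ(2B) M (φ(ω(2B))/ω(2B))^{1/p₁}`, and doubling replaces `μ(2B)` by `μ(B)`;
the series is then dominated by a geometric one.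
-/

open MeasureTheory Metric ENNReal Set

noncomputable def tailIntegral (φ : ℝ → ℝ) (t : ℝ) : ℝ :=
  (∫⁻ s in Ioi t, ENNReal.ofReal (φ s / s ^ 2)).toReal

/-- Condition (1.11). -/
def TailBound (φ : ℝ → ℝ) (C : ℝ) : Prop :=
  ∀ t, 0 < t → ∫⁻ s in Ioi t, ENNReal.ofReal (φ s / s ^ 2) ≤ ENNReal.ofReal (C * (φ t / t))

section TailIntegral

variable {φ : ℝ → ℝ} {C₂ c t : ℝ}

lemma ofReal_mul_div_self_le_lintegral_Ioc (hφ : ∀ t, 0 < t → 0 < φ t)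
    (hmono : MonotoneOn φ (Ioi 0)) (hc : 1 < c) (ht : 0 < t) :
    ENNReal.ofReal ((c - 1) / c ^ 2 * (φ t / t)) ≤
      ∫⁻ s in Ioc t (c * t), ENNReal.ofReal (φ s / s ^ 2) :=
  calc ENNReal.ofReal ((c - 1) / c ^ 2 * (φ t / t))
      = ∫⁻ _ in Ioc t (c * t), ENNReal.ofReal (φ t / (c * t) ^ 2) := by
        have := hφ t ht
        rw [setLIntegral_const, Real.volume_Ioc, ← ENNReal.ofReal_mul (by positivity)]
        congr 1
        field_simp
    _ ≤ ∫⁻ s in Ioc t (c * t), ENNReal.ofReal (φ s / s ^ 2) :=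
        setLIntegral_mono' measurableSet_Ioc fun s hs => ENNReal.ofReal_le_ofReal <|
          div_le_div₀ (hφ s (ht.trans hs.1)).le (hmono ht (ht.trans hs.1) hs.1.le)
            (pow_pos (ht.trans hs.1) 2) (pow_le_pow_left₀ (ht.trans hs.1).le hs.2 2)

lemma TailBound.lintegral_ne_top (htail : TailBound φ C₂)
    (ht : 0 < t) : ∫⁻ s in Ioi t, ENNReal.ofReal (φ s / s ^ 2) ≠ ⊤ :=
  ne_top_of_le_ne_top ofReal_ne_top (htail t ht)

lemma tailIntegral_antitoneOn (htail : TailBound φ C₂) :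
    AntitoneOn (tailIntegral φ) (Ioi 0) := fun _ ha _ _ hab =>
  toReal_mono (htail.lintegral_ne_top ha) (lintegral_mono_set (Ioi_subset_Ioi hab))

lemma mul_div_self_add_tailIntegral_le (hφ : ∀ t, 0 < t → 0 < φ t)
    (hmono : MonotoneOn φ (Ioi 0)) (htail : TailBound φ C₂)
    (hc : 1 < c) (ht : 0 < t) :
    (c - 1) / c ^ 2 * (φ t / t) + tailIntegral φ (c * t) ≤ tailIntegral φ t := by
  have hct : 0 < c * t := by positivity
  have hsplit : ∫⁻ s in Ioi t, ENNReal.ofReal (φ s / s ^ 2) =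
      (∫⁻ s in Ioc t (c * t), ENNReal.ofReal (φ s / s ^ 2)) +
        ∫⁻ s in Ioi (c * t), ENNReal.ofReal (φ s / s ^ 2) := by
    rw [← Ioc_union_Ioi_eq_Ioi (show t ≤ c * t by nlinarith),
      lintegral_union measurableSet_Ioi (Ioc_disjoint_Ioi le_rfl)]
  have h := toReal_mono (htail.lintegral_ne_top ht) <|
    hsplit ▸ add_le_add_left (ofReal_mul_div_self_le_lintegral_Ioc hφ hmono hc ht) _
  rwa [toReal_add ofReal_ne_top (htail.lintegral_ne_top hct),
    toReal_ofReal (mul_nonneg (div_nonneg (by linarith) (by positivity))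
      (div_pos (hφ t ht) ht).le)] at h

lemma div_self_le_tailIntegral (hφ : ∀ t, 0 < t → 0 < φ t)
    (hmono : MonotoneOn φ (Ioi 0)) (htail : TailBound φ C₂)
    (ht : 0 < t) : φ t / t ≤ 4 * tailIntegral φ t := by
  have h := mul_div_self_add_tailIntegral_le hφ hmono htail one_lt_two ht
  have : 0 ≤ tailIntegral φ (2 * t) := toReal_nonneg
  linarith

lemma tailIntegral_le (hφ : ∀ t, 0 < t → 0 < φ t)
    (hmono : MonotoneOn φ (Ioi 0)) (htail : TailBound φ C₂)
    (ht : 0 < t) : tailIntegral φ t ≤ C₂ * (φ t / t) := by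
  have hpos : 0 < tailIntegral φ t := by
    have := div_self_le_tailIntegral hφ hmono htail ht
    have := div_pos (hφ t ht) ht
    linarith
  have h : tailIntegral φ t ≤ max (C₂ * (φ t / t)) 0 :=
    toReal_ofReal' (r := C₂ * (φ t / t)) ▸ toReal_mono ofReal_ne_top (htail t ht)
  exact (le_max_iff.mp h).resolve_right (not_le.mpr hpos)

lemma TailBound.pos (hφ : ∀ t, 0 < t → 0 < φ t)
    (hmono : MonotoneOn φ (Ioi 0)) (htail : TailBound φ C₂) : 0 < C₂ := by
  have h1 := div_self_le_tailIntegral hφ hmono htail one_pos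
  have h2 := tailIntegral_le hφ hmono htail one_pos
  have := hφ 1 one_pos
  simp only [div_one] at h1 h2
  nlinarith

lemma exists_tailIntegral_mul_le_mul (hφ : ∀ t, 0 < t → 0 < φ t)
    (hmono : MonotoneOn φ (Ioi 0)) (htail : TailBound φ C₂)
    (hc : 1 < c) :
    ∃ θ, 0 ≤ θ ∧ θ < 1 ∧ ∀ t, 0 < t → tailIntegral φ (c * t) ≤ θ * tailIntegral φ t := by
  set a := (c - 1) / c ^ 2
  have ha : 0 < a := div_pos (by linarith) (by positivity)
  have hC₂ := htail.pos hφ hmono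
  have haC₂ : a ≤ C₂ := by
    have h1 := mul_div_self_add_tailIntegral_le hφ hmono htail hc one_pos
    have h2 := tailIntegral_le hφ hmono htail one_pos
    have h3 : 0 ≤ tailIntegral φ (c * 1) := toReal_nonneg
    have h4 := hφ 1 one_pos
    simp only [div_one] at h1 h2
    nlinarith
  refine ⟨1 - a / C₂, by rw [sub_nonneg, div_le_one hC₂]; exact haC₂,
    by have := div_pos ha hC₂; linarith, fun t ht => ?_⟩
  have h1 := mul_div_self_add_tailIntegral_le hφ hmono htail hc ht
  have h2 : tailIntegral φ t / C₂ ≤ φ t / t := by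
    rw [div_le_iff₀ hC₂]; linarith [tailIntegral_le hφ hmono htail ht]
  have := mul_le_mul_of_nonneg_left h2 ha.le
  calc tailIntegral φ (c * t) ≤ tailIntegral φ t - a * (tailIntegral φ t / C₂) := by linarith
    _ = (1 - a / C₂) * tailIntegral φ t := by ring

lemma exists_div_self_le_geometric (hφ : ∀ t, 0 < t → 0 < φ t)
    (hmono : MonotoneOn φ (Ioi 0)) (htail : TailBound φ C₂)
    (hc : 1 < c) :
    ∃ θ, 0 ≤ θ ∧ θ < 1 ∧ ∀ (t u : ℝ) (k : ℕ), 0 < t → c ^ k * t ≤ u →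
      φ u / u ≤ 4 * C₂ * θ ^ k * (φ t / t) := by
  obtain ⟨θ, hθ0, hθ1, hcontr⟩ := exists_tailIntegral_mul_le_mul hφ hmono htail hc
  have hiter : ∀ (k : ℕ) (t : ℝ), 0 < t →
      tailIntegral φ (c ^ k * t) ≤ θ ^ k * tailIntegral φ t := by
    intro k
    induction k with
    | zero => simp
    | succ k ih =>
      intro t ht
      calc tailIntegral φ (c ^ (k + 1) * t) = tailIntegral φ (c * (c ^ k * t)) := by ring_nf
        _ ≤ θ * tailIntegral φ (c ^ k * t) := hcontr _ (by positivity)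
        _ ≤ θ * (θ ^ k * tailIntegral φ t) := mul_le_mul_of_nonneg_left (ih t ht) hθ0
        _ = θ ^ (k + 1) * tailIntegral φ t := by ring
  refine ⟨θ, hθ0, hθ1, fun t u k ht hu => ?_⟩
  have hckt : 0 < c ^ k * t := by positivity
  calc φ u / u ≤ 4 * tailIntegral φ u :=
        div_self_le_tailIntegral hφ hmono htail (hckt.trans_le hu)
    _ ≤ 4 * tailIntegral φ (c ^ k * t) := by
        gcongr; exact tailIntegral_antitoneOn htail hckt (hckt.trans_le hu) hu
    _ ≤ 4 * (θ ^ k * (C₂ * (φ t / t))) := by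
        gcongr
        exact (hiter k t ht).trans (mul_le_mul_of_nonneg_left
          (tailIntegral_le hφ hmono htail ht) (pow_nonneg hθ0 k))
    _ = 4 * C₂ * θ ^ k * (φ t / t) := by ring

lemma exists_rpow_div_self_le_geometric (hφ : ∀ t, 0 < t → 0 < φ t)
    (hmono : MonotoneOn φ (Ioi 0)) (htail : TailBound φ C₂)
    (hc : 1 < c) {q : ℝ} (hq : 0 < q) :
    ∃ τ, 0 ≤ τ ∧ τ < 1 ∧ ∀ (t u : ℝ) (k : ℕ), 0 < t → c ^ k * t ≤ u →
      (φ u / u) ^ q ≤ (4 * C₂) ^ q * τ ^ k * (φ t / t) ^ q := by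
  obtain ⟨θ, hθ0, hθ1, hdecay⟩ := exists_div_self_le_geometric hφ hmono htail hc
  have hC₂ := htail.pos hφ hmono
  refine ⟨θ ^ q, Real.rpow_nonneg hθ0 q, Real.rpow_lt_one hθ0 hθ1 hq, fun t u k ht hu => ?_⟩
  have hu0 : 0 < u := (by positivity : 0 < c ^ k * t).trans_le hu
  calc (φ u / u) ^ q ≤ (4 * C₂ * θ ^ k * (φ t / t)) ^ q :=
        Real.rpow_le_rpow (div_pos (hφ u hu0) hu0).le (hdecay t u k ht hu) hq.le
    _ = (4 * C₂) ^ q * (θ ^ q) ^ k * (φ t / t) ^ q := by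
        have := div_pos (hφ t ht) ht
        rw [Real.mul_rpow (by positivity) this.le, Real.mul_rpow (by positivity) (by positivity),
          ← Real.rpow_natCast, ← Real.rpow_natCast, ← Real.rpow_mul hθ0, ← Real.rpow_mul hθ0,
          mul_comm q]

end TailIntegral

section Holder

variable {α : Type*} [MeasurableSpace α] {ν : Measure α} {p q : ℝ}

lemma lintegral_le_weighted_Lp_mul_Lq (hpq : p.HolderConjugate q) {ω g : α → ℝ≥0∞}
    (hω : AEMeasurable ω ν) (hg : AEMeasurable g ν) (hω0 : ∀ᵐ y ∂ν, ω y ≠ 0)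
    (hωT : ∀ᵐ y ∂ν, ω y ≠ ⊤) :
    ∫⁻ y, g y ∂ν ≤
      (∫⁻ y, g y ^ p * ω y ∂ν) ^ (1 / p) * (∫⁻ y, ω y ^ (1 - q) ∂ν) ^ (1 / q) := by
  have hsplit : ∀ᵐ y ∂ν, g y = (g y * ω y ^ (1 / p)) * ω y ^ (-(1 / p)) := by
    filter_upwards [hω0, hωT] with y h0 hT
    rw [mul_assoc, ← rpow_add _ _ h0 hT, add_neg_cancel, rpow_zero, mul_one]
  have hexp : -(1 / p) * q = 1 - q := by
    rw [neg_mul, one_div_mul_eq_div, hpq.symm.div_conj_eq_sub_one]; ring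
  calc ∫⁻ y, g y ∂ν
      = ∫⁻ y, ((fun y => g y * ω y ^ (1 / p)) * fun y => ω y ^ (-(1 / p))) y ∂ν :=
        lintegral_congr_ae hsplit
    _ ≤ (∫⁻ y, (g y * ω y ^ (1 / p)) ^ p ∂ν) ^ (1 / p) *
          (∫⁻ y, (ω y ^ (-(1 / p))) ^ q ∂ν) ^ (1 / q) :=
        lintegral_mul_le_Lp_mul_Lq ν hpq (hg.mul (hω.pow_const _)) (hω.pow_const _)
    _ = (∫⁻ y, g y ^ p * ω y ∂ν) ^ (1 / p) * (∫⁻ y, ω y ^ (1 - q) ∂ν) ^ (1 / q) := by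
        simp_rw [mul_rpow_of_nonneg _ _ hpq.nonneg, ← rpow_mul, one_div_mul_cancel hpq.ne_zero,
          rpow_one, hexp]

lemma rpow_one_div_le_of_Ap (hpq : p.HolderConjugate q) {m W Q A : ℝ≥0∞}
    (hm0 : m ≠ 0) (hmT : m ≠ ⊤) (hW0 : W ≠ 0) (hWT : W ≠ ⊤)
    (hAp : (m⁻¹ * W) * (m⁻¹ * Q) ^ (p - 1) ≤ A) :
    Q ^ (1 / q) ≤ A ^ (1 / p) * m * W ^ (-(1 / p)) := by
  have hexp : (p - 1) * (1 / p) = 1 / q := by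
    rw [sub_mul, mul_one_div_cancel hpq.ne_zero, one_mul, one_div, one_div, hpq.one_sub_inv]
  have h1 : (m⁻¹ * Q) ^ (p - 1) ≤ A * (m * W⁻¹) := by
    have h0 : m⁻¹ * W ≠ 0 := mul_ne_zero (ENNReal.inv_ne_zero.2 hmT) hW0
    have hT : m⁻¹ * W ≠ ⊤ := mul_ne_top (ENNReal.inv_ne_top.2 hm0) hWT
    rwa [mul_comm, ← ENNReal.le_div_iff_mul_le (.inl h0) (.inl hT), div_eq_mul_inv,
      ENNReal.mul_inv (.inl (ENNReal.inv_ne_zero.2 hmT)) (.inl (ENNReal.inv_ne_top.2 hm0)),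
      inv_inv] at hAp
  have h2 : (m⁻¹ * Q) ^ (1 / q) ≤ A ^ (1 / p) * m ^ (1 / p) * W ^ (-(1 / p)) := by
    have := rpow_le_rpow h1 hpq.one_div_nonneg
    rwa [← rpow_mul, hexp, mul_rpow_of_nonneg _ _ hpq.one_div_nonneg,
      mul_rpow_of_nonneg _ _ hpq.one_div_nonneg, inv_rpow, ← rpow_neg, ← mul_assoc] at this
  calc Q ^ (1 / q) = m ^ (1 / q) * (m⁻¹ * Q) ^ (1 / q) := by
        rw [← mul_rpow_of_nonneg _ _ hpq.symm.one_div_nonneg, ← mul_assoc,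
          ENNReal.mul_inv_cancel hm0 hmT, one_mul]
    _ ≤ m ^ (1 / q) * (A ^ (1 / p) * m ^ (1 / p) * W ^ (-(1 / p))) := by gcongr
    _ = A ^ (1 / p) * (m ^ (1 / p) * m ^ (1 / q)) * W ^ (-(1 / p)) := by ring
    _ = A ^ (1 / p) * m * W ^ (-(1 / p)) := by
        rw [← rpow_add _ _ hm0 hmT, hpq.one_div_add_one_div, div_one, rpow_one]

lemma lintegral_le_of_Ap (hpq : p.HolderConjugate q) {ω g : α → ℝ≥0∞}
    (hω : AEMeasurable ω ν) (hg : AEMeasurable g ν) {m A : ℝ≥0∞} (hm0 : m ≠ 0) (hmT : m ≠ ⊤)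
    (hA : A ≠ ⊤) (hW0 : ∫⁻ y, ω y ∂ν ≠ 0) (hWT : ∫⁻ y, ω y ∂ν ≠ ⊤)
    (hAp : (m⁻¹ * ∫⁻ y, ω y ∂ν) * (m⁻¹ * ∫⁻ y, ω y ^ (1 - q) ∂ν) ^ (p - 1) ≤ A) :
    ∫⁻ y, g y ∂ν ≤
      (∫⁻ y, g y ^ p * ω y ∂ν) ^ (1 / p) * (A ^ (1 / p) * m * (∫⁻ y, ω y ∂ν) ^ (-(1 / p))) := by
  have hQ := rpow_one_div_le_of_Ap hpq hm0 hmT hW0 hWT hAp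
  have hQT : ∫⁻ y, ω y ^ (1 - q) ∂ν ≠ ⊤ := by
    refine (rpow_eq_top_iff_of_pos hpq.symm.one_div_pos).not.1 (ne_top_of_le_ne_top ?_ hQ)
    exact mul_ne_top (mul_ne_top (rpow_ne_top_of_nonneg hpq.one_div_nonneg hA) hmT)
      (rpow_ne_top_of_nonneg' (pos_iff_ne_zero.2 hW0) hWT)
  have hω0 : ∀ᵐ y ∂ν, ω y ≠ 0 := by
    filter_upwards [ae_lt_top' (hω.pow_const (1 - q)) hQT] with y hy h0
    rw [h0, zero_rpow_of_neg (by linarith [hpq.symm.lt])] at hy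
    exact lt_irrefl _ hy
  exact (lintegral_le_weighted_Lp_mul_Lq hpq hω hg hω0 (ae_lt_top' hω hWT).ne_of_lt).trans
    (by gcongr)

end Holder

lemma rpow_mul_rpow_neg_le_ofReal {p M b : ℝ} (hp : 0 < p) (hM : 0 ≤ M) (hb : 0 ≤ b)
    {I W : ℝ≥0∞} (hW0 : W ≠ 0) (hWT : W ≠ ⊤) (hI : I ≤ ENNReal.ofReal (M ^ p * b)) :
    I ^ (1 / p) * W ^ (-(1 / p)) ≤ ENNReal.ofReal (M * (b / W.toReal) ^ (1 / p)) := by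
  have hw : 0 < W.toReal := toReal_pos hW0 hWT
  calc I ^ (1 / p) * W ^ (-(1 / p))
      ≤ ENNReal.ofReal (M ^ p * b) ^ (1 / p) * ENNReal.ofReal W.toReal ^ (-(1 / p)) := by
        rw [ofReal_toReal hWT]; gcongr
    _ = ENNReal.ofReal (M * (b / W.toReal) ^ (1 / p)) := by
        rw [ofReal_rpow_of_nonneg (by positivity) (by positivity), ofReal_rpow_of_pos hw,
          ← ofReal_mul (by positivity), Real.mul_rpow (by positivity) hb, ← Real.rpow_mul hM,
          mul_one_div_cancel hp.ne', Real.rpow_one, Real.div_rpow hb hw.le, Real.rpow_neg hw.le]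
        congr 1
        ring

lemma inv_measure_mul_lintegral_le_of_Ap {α : Type*} [MeasurableSpace α] {μ : Measure α}
    {p q : ℝ} (hpq : p.HolderConjugate q) {ω : α → ℝ≥0∞} (hω : Measurable ω)
    {f : α → ℝ} (hf : Measurable f) {B B' : Set α} {Cμ A : ℝ≥0∞} {M b : ℝ}
    (hdoub : μ B' ≤ Cμ * μ B) (hB0 : μ B ≠ 0) (hBT : μ B ≠ ⊤) (hB'0 : μ B' ≠ 0)
    (hB'T : μ B' ≠ ⊤) (hW0 : 0 < ∫⁻ y in B', ω y ∂μ) (hWT : ∫⁻ y in B', ω y ∂μ < ⊤)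
    (hA : A ≠ ⊤)
    (hAp : ((μ B')⁻¹ * ∫⁻ y in B', ω y ∂μ) *
      ((μ B')⁻¹ * ∫⁻ y in B', ω y ^ (1 - q) ∂μ) ^ (p - 1) ≤ A)
    (hM : 0 ≤ M) (hb : 0 ≤ b)
    (hfM : ∫⁻ y in B', ENNReal.ofReal (|f y| ^ p) * ω y ∂μ ≤ ENNReal.ofReal (M ^ p * b)) :
    (μ B)⁻¹ * ∫⁻ y in B', ENNReal.ofReal |f y| ∂μ ≤
      Cμ * A ^ (1 / p) * ENNReal.ofReal (M * (b / (∫⁻ y in B', ω y ∂μ).toReal) ^ (1 / p)) := by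
  have hfp : ∫⁻ y in B', ENNReal.ofReal |f y| ^ p * ω y ∂μ =
      ∫⁻ y in B', ENNReal.ofReal (|f y| ^ p) * ω y ∂μ := by
    simp_rw [ofReal_rpow_of_nonneg (abs_nonneg _) hpq.nonneg]
  have hmass : (μ B)⁻¹ * μ B' ≤ Cμ := (ENNReal.inv_mul_le_iff hB0 hBT).2 (by rwa [mul_comm])
  calc (μ B)⁻¹ * ∫⁻ y in B', ENNReal.ofReal |f y| ∂μ
      ≤ (μ B)⁻¹ * ((∫⁻ y in B', ENNReal.ofReal |f y| ^ p * ω y ∂μ) ^ (1 / p) *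
          (A ^ (1 / p) * μ B' * (∫⁻ y in B', ω y ∂μ) ^ (-(1 / p)))) := by
        gcongr
        exact lintegral_le_of_Ap hpq hω.aemeasurable hf.abs.ennreal_ofReal.aemeasurable hB'0 hB'T
          hA hW0.ne' hWT.ne hAp
    _ = A ^ (1 / p) * ((μ B)⁻¹ * μ B') * ((∫⁻ y in B', ENNReal.ofReal (|f y| ^ p) * ω y ∂μ) ^
          (1 / p) * (∫⁻ y in B', ω y ∂μ) ^ (-(1 / p))) := by
        rw [hfp]; ring
    _ ≤ A ^ (1 / p) * Cμ *
          ENNReal.ofReal (M * (b / (∫⁻ y in B', ω y ∂μ).toReal) ^ (1 / p)) := by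
        gcongr
        exact rpow_mul_rpow_neg_le_ofReal hpq.pos hM hb hW0.ne' hWT.ne hfM
    _ = Cμ * A ^ (1 / p) *
          ENNReal.ofReal (M * (b / (∫⁻ y in B', ω y ∂μ).toReal) ^ (1 / p)) := by ring

lemma pow_mul_le_of_le_two_mul {V : ℝ → ℝ≥0∞} {a : ℝ≥0∞}
    (h : ∀ ρ, 0 < ρ → a * V ρ ≤ V (2 * ρ)) {r : ℝ} (hr : 0 < r) (k : ℕ) :
    a ^ k * V r ≤ V (2 ^ k * r) := by
  induction k with
  | zero => simp
  | succ k ih =>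
    calc a ^ (k + 1) * V r = a * (a ^ k * V r) := by ring
      _ ≤ a * V (2 ^ k * r) := by gcongr
      _ ≤ V (2 ^ (k + 1) * r) := by
        rw [pow_succ', mul_assoc]; exact h _ (by positivity)

lemma pow_mul_toReal_le_of_le_two_mul {V : ℝ → ℝ≥0∞} {a : ℝ} (ha : 0 ≤ a)
    (h : ∀ ρ, 0 < ρ → ENNReal.ofReal a * V ρ ≤ V (2 * ρ)) (hV : ∀ ρ, 0 < ρ → V ρ ≠ ⊤)
    {r : ℝ} (hr : 0 < r) (k : ℕ) : a ^ k * (V r).toReal ≤ (V (2 ^ k * r)).toReal := by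
  have := toReal_mono (hV _ (by positivity)) (pow_mul_le_of_le_two_mul h hr k)
  rwa [toReal_mul, toReal_pow, toReal_ofReal ha] at this

lemma inv_measure_ball_mul_lintegral_ball_two_mul_le {X : Type*} [PseudoMetricSpace X]
    [MeasurableSpace X] {μ : Measure X} {p q : ℝ} (hpq : p.HolderConjugate q)
    {ω : X → ℝ≥0∞} (hω : Measurable ω) {f : X → ℝ} (hf : Measurable f) {Cμ A : ℝ≥0∞}
    (hA : A ≠ ⊤) {φ : ℝ → ℝ} (hφ : ∀ t, 0 < t → 0 < φ t) {M : ℝ} (hM : 0 ≤ M)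
    (hdoub : ∀ x r, μ (ball x (2 * r)) ≤ Cμ * μ (ball x r))
    (hball : ∀ x r, 0 < r → μ (ball x r) ≠ 0 ∧ μ (ball x r) ≠ ⊤)
    (hw : ∀ x r, 0 < r → 0 < ∫⁻ y in ball x r, ω y ∂μ ∧ ∫⁻ y in ball x r, ω y ∂μ < ⊤)
    (hAp : ∀ x r, 0 < r → ((μ (ball x r))⁻¹ * ∫⁻ y in ball x r, ω y ∂μ) *
      ((μ (ball x r))⁻¹ * ∫⁻ y in ball x r, ω y ^ (1 - q) ∂μ) ^ (p - 1) ≤ A)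
    (hfM : ∀ x r, 0 < r → ∫⁻ y in ball x r, ENNReal.ofReal (|f y| ^ p) * ω y ∂μ ≤
      ENNReal.ofReal (M ^ p * φ ((∫⁻ y in ball x r, ω y ∂μ).toReal)))
    (x : X) {ρ : ℝ} (hρ : 0 < ρ) :
    (μ (ball x ρ))⁻¹ * ∫⁻ y in ball x (2 * ρ), ENNReal.ofReal |f y| ∂μ ≤
      Cμ * A ^ (1 / p) * ENNReal.ofReal (M * (φ (∫⁻ y in ball x (2 * ρ), ω y ∂μ).toReal /
        (∫⁻ y in ball x (2 * ρ), ω y ∂μ).toReal) ^ (1 / p)) := by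
  have h2ρ : 0 < 2 * ρ := by positivity
  exact inv_measure_mul_lintegral_le_of_Ap hpq hω hf (hdoub x ρ) (hball x ρ hρ).1
    (hball x ρ hρ).2 (hball x _ h2ρ).1 (hball x _ h2ρ).2 (hw x _ h2ρ).1 (hw x _ h2ρ).2 hA
    (hAp x _ h2ρ) hM (hφ _ (toReal_pos (hw x _ h2ρ).1.ne' (hw x _ h2ρ).2.ne)).le (hfM x _ h2ρ)

lemma mul_ofReal_le_ofReal_toReal_add_one_mul {K : ℝ≥0∞} (hK : K ≠ ⊤) {y : ℝ} (hy : 0 ≤ y) :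
    K * ENNReal.ofReal y ≤ ENNReal.ofReal ((K.toReal + 1) * y) := by
  rw [← ofReal_toReal hK, ← ofReal_mul toReal_nonneg, toReal_ofReal toReal_nonneg]
  exact ofReal_le_ofReal (by nlinarith)

theorem stmt13_general {X : Type*} [MetricSpace X] [MeasurableSpace X]
    (μ : Measure X) (Cμ : ℝ≥0∞) (hCμ : Cμ ≠ ⊤)
    (hdoub : ∀ (x : X) (r : ℝ), μ (ball x (2 * r)) ≤ Cμ * μ (ball x r))
    (hball : ∀ (x : X) (r : ℝ), 0 < r → μ (ball x r) ≠ 0 ∧ μ (ball x r) ≠ ⊤)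
    (p₁ p₁' : ℝ) (hp₁ : 1 < p₁) (hpp' : 1 / p₁ + 1 / p₁' = 1)
    (ω : X → ℝ≥0∞) (hωm : Measurable ω)
    (A : ℝ≥0∞) (hA : A ≠ ⊤)
    (hAp : ∀ (x : X) (r : ℝ), 0 < r →
      ((μ (ball x r))⁻¹ * ∫⁻ y in ball x r, ω y ∂μ) *
        ((μ (ball x r))⁻¹ * ∫⁻ y in ball x r, ω y ^ (1 - p₁') ∂μ) ^ (p₁ - 1) ≤ A)
    (hw : ∀ (x : X) (r : ℝ), 0 < r →
      0 < ∫⁻ y in ball x r, ω y ∂μ ∧ ∫⁻ y in ball x r, ω y ∂μ < ⊤)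
    (C₃ C₄ : ℝ) (hC₃ : 1 < C₃)
    (hrd : ∀ (x : X) (r : ℝ), 0 < r →
      ENNReal.ofReal C₃ * ∫⁻ y in ball x r, ω y ∂μ ≤ ∫⁻ y in ball x (2 * r), ω y ∂μ ∧
      ∫⁻ y in ball x (2 * r), ω y ∂μ ≤ ENNReal.ofReal C₄ * ∫⁻ y in ball x r, ω y ∂μ)
    (φ : ℝ → ℝ) (hφpos : ∀ t : ℝ, 0 < t → 0 < φ t)
    (hφmono : MonotoneOn φ (Set.Ioi 0))
    (C₂ : ℝ)
    (h111 : ∀ t : ℝ, 0 < t →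
      ∫⁻ s in Set.Ioi t, ENNReal.ofReal (φ s / s ^ 2) ≤ ENNReal.ofReal (C₂ * (φ t / t)))
    (f : X → ℝ) (hf : Measurable f) (M : ℝ) (hM : 0 ≤ M)
    (hfM : ∀ (x : X) (r : ℝ), 0 < r →
      ∫⁻ y in ball x r, ENNReal.ofReal (|f y| ^ p₁) * ω y ∂μ ≤
        ENNReal.ofReal (M ^ p₁ * φ ((∫⁻ y in ball x r, ω y ∂μ).toReal))) :
    ∃ C : ℝ, 0 < C ∧ ∀ (x : X) (r : ℝ), 0 < r →
      ∑' k : ℕ, (μ (ball x (2 ^ (k + 1) * r)))⁻¹ *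
          ∫⁻ y in ball x (2 ^ (k + 2) * r), ENNReal.ofReal |f y| ∂μ ≤
        ENNReal.ofReal (C * M *
          (φ ((∫⁻ y in ball x r, ω y ∂μ).toReal) /
            (∫⁻ y in ball x r, ω y ∂μ).toReal) ^ (1 / p₁)) := by
  have hpq : p₁.HolderConjugate p₁' :=
    Real.holderConjugate_iff.2 ⟨hp₁, by simpa only [one_div] using hpp'⟩
  obtain ⟨τ, hτ0, hτ1, hdecay⟩ :=
    exists_rpow_div_self_le_geometric hφpos hφmono h111 hC₃ hpq.one_div_pos
  set E := (4 * C₂) ^ (1 / p₁)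
  have hE : 0 ≤ E :=
    Real.rpow_nonneg (by linarith [TailBound.pos hφpos hφmono h111]) _
  set K := Cμ * A ^ (1 / p₁) * ENNReal.ofReal E * (1 - ENNReal.ofReal τ)⁻¹
  have hK : K ≠ ⊤ :=
    mul_ne_top (mul_ne_top (mul_ne_top hCμ (rpow_ne_top_of_nonneg hpq.one_div_nonneg hA))
      ofReal_ne_top) (ENNReal.inv_ne_top.2 (tsub_pos_of_lt (ofReal_lt_one.2 hτ1)).ne')
  refine ⟨K.toReal + 1, by positivity, fun x r hr => ?_⟩
  set W : ℝ → ℝ≥0∞ := fun ρ => ∫⁻ y in ball x ρ, ω y ∂μ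
  have hW : 0 < (W r).toReal := toReal_pos (hw x r hr).1.ne' (hw x r hr).2.ne
  set G := (φ (W r).toReal / (W r).toReal) ^ (1 / p₁)
  have hG : 0 ≤ G := Real.rpow_nonneg (div_pos (hφpos _ hW) hW).le _
  have hMG : 0 ≤ M * G := mul_nonneg hM hG
  have hterm : ∀ k : ℕ, (μ (ball x (2 ^ (k + 1) * r)))⁻¹ *
      ∫⁻ y in ball x (2 ^ (k + 2) * r), ENNReal.ofReal |f y| ∂μ ≤
      Cμ * A ^ (1 / p₁) * ENNReal.ofReal (E * (M * G)) * ENNReal.ofReal τ ^ k := by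
    intro k
    have hgrow := pow_mul_toReal_le_of_le_two_mul (by linarith) (fun ρ hρ => (hrd x ρ hρ).1)
      (fun ρ hρ => (hw x ρ hρ).2.ne) hr (k + 2)
    rw [show (2 : ℝ) ^ (k + 2) * r = 2 * (2 ^ (k + 1) * r) by ring] at hgrow ⊢
    refine (inv_measure_ball_mul_lintegral_ball_two_mul_le hpq hωm hf hA hφpos hM hdoub hball hw
      hAp hfM x (by positivity)).trans ?_
    rw [← ofReal_pow hτ0, mul_assoc (Cμ * A ^ (1 / p₁)), ← ofReal_mul (mul_nonneg hE hMG)]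
    refine mul_le_mul_right (ofReal_le_ofReal ?_) _
    calc _ ≤ M * (E * τ ^ (k + 2) * G) := by gcongr; exact hdecay _ _ _ hW hgrow
      _ ≤ M * (E * τ ^ k * G) := by
        gcongr M * (E * ?_ * G); exact pow_le_pow_of_le_one hτ0 hτ1.le (Nat.le_add_right k 2)
      _ = E * (M * G) * τ ^ k := by ring
  calc _ ≤ ∑' k : ℕ, Cμ * A ^ (1 / p₁) * ENNReal.ofReal (E * (M * G)) * ENNReal.ofReal τ ^ k :=
        ENNReal.tsum_le_tsum hterm
    _ = K * ENNReal.ofReal (M * G) := by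
        rw [ENNReal.tsum_mul_left, ENNReal.tsum_geometric, ofReal_mul hE]; ring
    _ ≤ ENNReal.ofReal ((K.toReal + 1) * (M * G)) := mul_ofReal_le_ofReal_toReal_add_one_mul hK hMG
    _ = _ := by rw [mul_assoc]

/-- Tail series estimate used in the proof of Theorem 1.8: for `ω ∈ A_{p₁}(μ)` and
`f ∈ M^{p₁,φ}(ω)` with norm at most `M`,
`∑_{k≥1} μ(2^k B)⁻¹ ∫_{2^{k+1}B} |f| dμ ≤ C M (φ(ω(B))/ω(B))^{1/p₁}`. -/
theorem stmt13 {X : Type*} [MetricSpace X] [MeasurableSpace X] [BorelSpace X]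
    (μ : Measure X) (Cμ : ℝ≥0∞) (hCμ : Cμ ≠ ⊤)
    (hdoub : ∀ (x : X) (r : ℝ), μ (ball x (2 * r)) ≤ Cμ * μ (ball x r))
    (hball : ∀ (x : X) (r : ℝ), 0 < r → μ (ball x r) ≠ 0 ∧ μ (ball x r) ≠ ⊤)
    (p₁ p₁' : ℝ) (hp₁ : 1 < p₁) (hpp' : 1 / p₁ + 1 / p₁' = 1)
    (ω : X → ℝ≥0∞) (hωm : Measurable ω)
    (A : ℝ≥0∞) (hA : A ≠ ⊤)
    (hAp : ∀ (x : X) (r : ℝ), 0 < r →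
      ((μ (ball x r))⁻¹ * ∫⁻ y in ball x r, ω y ∂μ) *
        ((μ (ball x r))⁻¹ * ∫⁻ y in ball x r, ω y ^ (1 - p₁') ∂μ) ^ (p₁ - 1) ≤ A)
    (hw : ∀ (x : X) (r : ℝ), 0 < r →
      0 < ∫⁻ y in ball x r, ω y ∂μ ∧ ∫⁻ y in ball x r, ω y ∂μ < ⊤)
    (C₃ C₄ : ℝ) (hC₃ : 1 < C₃) (hC₄ : 1 < C₄)
    (hrd : ∀ (x : X) (r : ℝ), 0 < r →
      ENNReal.ofReal C₃ * ∫⁻ y in ball x r, ω y ∂μ ≤ ∫⁻ y in ball x (2 * r), ω y ∂μ ∧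
      ∫⁻ y in ball x (2 * r), ω y ∂μ ≤ ENNReal.ofReal C₄ * ∫⁻ y in ball x r, ω y ∂μ)
    (φ : ℝ → ℝ) (hφpos : ∀ t : ℝ, 0 < t → 0 < φ t)
    (hφmono : MonotoneOn φ (Set.Ioi 0)) (hφcont : ContinuousOn φ (Set.Ioi 0))
    (C₁ C₂ : ℝ)
    (h110 : ∀ s r : ℝ, 0 < s → s ≤ r → φ r / r ≤ C₁ * (φ s / s))
    (h111 : ∀ t : ℝ, 0 < t →
      ∫⁻ s in Set.Ioi t, ENNReal.ofReal (φ s / s ^ 2) ≤ ENNReal.ofReal (C₂ * (φ t / t)))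
    (f : X → ℝ) (hf : Measurable f) (M : ℝ) (hM : 0 ≤ M)
    (hfM : ∀ (x : X) (r : ℝ), 0 < r →
      ∫⁻ y in ball x r, ENNReal.ofReal (|f y| ^ p₁) * ω y ∂μ ≤
        ENNReal.ofReal (M ^ p₁ * φ ((∫⁻ y in ball x r, ω y ∂μ).toReal))) :
    ∃ C : ℝ, 0 < C ∧ ∀ (x : X) (r : ℝ), 0 < r →
      ∑' k : ℕ, (μ (ball x (2 ^ (k + 1) * r)))⁻¹ *
          ∫⁻ y in ball x (2 ^ (k + 2) * r), ENNReal.ofReal |f y| ∂μ ≤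
        ENNReal.ofReal (C * M *
          (φ ((∫⁻ y in ball x r, ω y ∂μ).toReal) /
            (∫⁻ y in ball x r, ω y ∂μ).toReal) ^ (1 / p₁)) :=
  stmt13_general μ Cμ hCμ hdoub hball p₁ p₁' hp₁ hpp' ω hωm A hA hAp hw C₃ C₄ hC₃ hrd φ hφpos hφmono
    C₂ h111 f hf M hM hfM
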